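/- arXiv:2209.13610 — 3 statements merged into one kernel-verified Lean document; each statement's English description precedes it below -/
import Mathlib

section
/- Let a < b, y_a, ỹ_a be real numbers and let f : [a, b] → ℝ be continuous. Define y(x) = y_a + (x - a)·ỹ_a - ∫_a^x (x - s)·f(s) ds for x ∈ [a, b]. Then y is twice differentiable on [a, b] with -y''(x) = f(x) for all x ∈ [a, b], y(a) = y_a, and y'(a) = ỹ_a. -/
/-!
Writing `(x - s) f(s) = x f(s) - s f(s)` turns the integral term into `x F(x) - G(x)` with
`F(x) = ∫_a^x f` and `G(x) = ∫_a^x s f(s)`. By the fundamental theorem of calculus, taken within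
`[a, b]` so that only continuity on `[a, b]` is needed, its derivative is
`F(x) + x f(x) - x f(x) = F(x)`. Hence `y' = ỹ_a - F` and `y'' = -f`.
-/

open Set intervalIntegral MeasureTheory

theorem ContinuousOn.hasDerivWithinAt_integral_Icc {E : Type*} [NormedAddCommGroup E]
    [NormedSpace ℝ E] [CompleteSpace E] {f : ℝ → E} {a b x : ℝ}
    (hf : ContinuousOn f (Icc a b)) (hx : x ∈ Icc a b) :
    HasDerivWithinAt (fun u => ∫ t in a..u, f t) (f x) (Icc a b) x := by
  have : Fact (x ∈ Icc a b) := ⟨hx⟩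
  refine integral_hasDerivWithinAt_right ?_
    (hf.stronglyMeasurableAtFilter_nhdsWithin measurableSet_Icc x) (hf x hx)
  exact (hf.mono (Icc_subset_Icc_right hx.2)).intervalIntegrable_of_Icc hx.1

theorem intervalIntegral.integral_sub_mul_eq {f : ℝ → ℝ} {a x : ℝ}
    (hf : IntervalIntegrable f volume a x) :
    ∫ s in a..x, (x - s) * f s = x * (∫ s in a..x, f s) - ∫ s in a..x, s * f s := by
  simp_rw [sub_mul]
  have hsf : IntervalIntegrable (fun s => s * f s) volume a x :=
    hf.continuousOn_mul continuousOn_id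
  rw [integral_sub (hf.const_mul x) hsf, integral_const_mul]

theorem ContinuousOn.hasDerivWithinAt_integral_sub_mul {f : ℝ → ℝ} {a b x : ℝ}
    (hf : ContinuousOn f (Icc a b)) (hx : x ∈ Icc a b) :
    HasDerivWithinAt (fun u => ∫ s in a..u, (u - s) * f s) (∫ s in a..x, f s) (Icc a b) x := by
  have hsplit : ∀ u ∈ Icc a b,
      ∫ s in a..u, (u - s) * f s = u * (∫ s in a..u, f s) - ∫ s in a..u, s * f s :=
    fun u hu => integral_sub_mul_eq <|
      (hf.mono (Icc_subset_Icc_right hu.2)).intervalIntegrable_of_Icc hu.1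
  have hG : HasDerivWithinAt (fun u => ∫ s in a..u, s * f s) (x * f x) (Icc a b) x :=
    (continuousOn_id.mul hf).hasDerivWithinAt_integral_Icc hx
  have hxF := (hasDerivWithinAt_id x (Icc a b)).fun_mul (hf.hasDerivWithinAt_integral_Icc hx)
  exact ((hxF.fun_sub hG).congr_deriv (by simp only [id, one_mul]; ring)).congr hsplit
    (hsplit x hx)

theorem stmt_8_general (a b ya yta : ℝ) (f : ℝ → ℝ)
    (hf : ContinuousOn f (Set.Icc a b)) (y : ℝ → ℝ)
    (hy : ∀ x, y x = ya + (x - a) * yta - ∫ s in a..x, (x - s) * f s) :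
    ∃ y' : ℝ → ℝ,
      (∀ x ∈ Set.Icc a b, HasDerivWithinAt y (y' x) (Set.Icc a b) x) ∧
      (∀ x ∈ Set.Icc a b, HasDerivWithinAt y' (-f x) (Set.Icc a b) x) ∧
      y a = ya ∧ y' a = yta := by
  refine ⟨fun x => yta - ∫ s in a..x, f s, fun x hx => ?_, fun x hx => ?_, by simp [hy],
    by simp⟩
  · have hline : HasDerivWithinAt (fun u => ya + (u - a) * yta) yta (Icc a b) x := by
      simpa using ((hasDerivWithinAt_id x (Icc a b)).sub_const a).mul_const yta |>.const_add ya
    rw [funext hy]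
    exact hline.sub (hf.hasDerivWithinAt_integral_sub_mul hx)
  · simpa using (hf.hasDerivWithinAt_integral_Icc hx).const_sub yta

theorem stmt_8 (a b ya yta : ℝ) (hab : a < b) (f : ℝ → ℝ)
    (hf : ContinuousOn f (Set.Icc a b)) (y : ℝ → ℝ)
    (hy : ∀ x, y x = ya + (x - a) * yta - ∫ s in a..x, (x - s) * f s) :
    ∃ y' : ℝ → ℝ,
      (∀ x ∈ Set.Icc a b, HasDerivWithinAt y (y' x) (Set.Icc a b) x) ∧
      (∀ x ∈ Set.Icc a b, HasDerivWithinAt y' (-f x) (Set.Icc a b) x) ∧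
      y a = ya ∧ y' a = yta :=
  stmt_8_general a b ya yta f hf y hy
end

section
/- Let ε > 0 and define E(x) = ∫_0^x exp(-t^2/(2ε)) dt and y(x) = cos(π·x) + E(x)/E(1). Then E(1) > 0, y is twice differentiable on ℝ, and for every x ∈ [-1, 1], -ε·y''(x) - x·y'(x) = ε·π^2·cos(π·x) + π·x·sin(π·x); moreover y(-1) = -2 and y(1) = 0. -/
/-!
With g(t) = exp(-t²/(2ε)) we have E' = g and g' = -(x/ε)·g, so -ε·E'' - x·E' = 0: the error-function
part solves the homogeneous equation and the forcing term comes from cos(πx) alone. Since g is even,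
E is odd, which gives E(-1) = -E(1) and hence the boundary values.
-/

open Real

theorem Function.Even.odd_intervalIntegral {E : Type*} [NormedAddCommGroup E] [NormedSpace ℝ E]
    {f : ℝ → E} (hf : f.Even) : Function.Odd fun x => ∫ t in (0 : ℝ)..x, f t := by
  intro x
  calc ∫ t in (0 : ℝ)..-x, f t = ∫ t in (0 : ℝ)..-x, f (-t) := by simp only [hf _]
    _ = ∫ t in x..0, f t := by simp [intervalIntegral.integral_comp_neg f]
    _ = -∫ t in (0 : ℝ)..x, f t := intervalIntegral.integral_symm 0 x

theorem hasDerivAt_exp_neg_sq_div (ε x : ℝ) :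
    HasDerivAt (fun t => exp (-t ^ 2 / (2 * ε))) (-x / ε * exp (-x ^ 2 / (2 * ε))) x := by
  have := ((hasDerivAt_pow 2 x).fun_neg.div_const (2 * ε)).exp
  convert this using 1
  push_cast
  ring

theorem stmt_15 (ε : ℝ) (hε : 0 < ε) (E y : ℝ → ℝ)
    (hE : ∀ x, E x = ∫ t in (0 : ℝ)..x, Real.exp (-t ^ 2 / (2 * ε)))
    (hy : ∀ x, y x = Real.cos (Real.pi * x) + E x / E 1) :
    0 < E 1 ∧ Differentiable ℝ y ∧ Differentiable ℝ (deriv y) ∧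
    (∀ x ∈ Set.Icc (-1 : ℝ) 1,
      -ε * deriv (deriv y) x - x * deriv y x =
        ε * Real.pi ^ 2 * Real.cos (Real.pi * x) + Real.pi * x * Real.sin (Real.pi * x)) ∧
    y (-1) = -2 ∧ y 1 = 0 := by
  set g : ℝ → ℝ := fun t => exp (-t ^ 2 / (2 * ε))
  have hg : Continuous g := by fun_prop
  have hE' : ∀ x, HasDerivAt E (g x) x := fun x => by
    rw [funext hE]; exact (hg.integral_hasStrictDerivAt 0 x).hasDerivAt
  have hE1 : 0 < E 1 := by
    rw [hE]; exact intervalIntegral.intervalIntegral_pos_of_pos (hg.intervalIntegrable 0 1)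
      (fun _ => exp_pos _) one_pos
  have hπ : ∀ x : ℝ, HasDerivAt (fun x => π * x) π x := fun x => by
    simpa using (hasDerivAt_id x).const_mul π
  have hy' : ∀ x, HasDerivAt y (-sin (π * x) * π + g x / E 1) x := fun x => by
    rw [funext hy]; exact (hπ x).cos.add ((hE' x).div_const _)
  have hy'' : ∀ x, HasDerivAt (deriv y)
      (-(cos (π * x) * π) * π + -x / ε * g x / E 1) x := fun x => by
    rw [funext fun x => (hy' x).deriv]
    exact ((hπ x).sin.neg.mul_const π).add ((hasDerivAt_exp_neg_sq_div ε x).div_const _)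
  have hE_neg : E (-1) = -E 1 := by
    simp only [hE]
    exact (show g.Even from fun t => by simp [g]).odd_intervalIntegral 1
  refine ⟨hE1, fun x => (hy' x).differentiableAt, fun x => (hy'' x).differentiableAt,
    fun x _ => ?_, ?_, ?_⟩
  · rw [(hy'' x).deriv, (hy' x).deriv]
    field_simp
    ring
  · rw [hy, hE_neg, mul_neg_one, cos_neg, cos_pi, neg_div, div_self hE1.ne']
    norm_num
  · rw [hy, mul_one, cos_pi, div_self hE1.ne']
    norm_num
end

section
/- Let a < b and let I_1, …, I_K be closed subintervals covering [a, b]. For each k ∈ {1, …, K}, let x_{1,k}, …, x_{m_k,k} be distinct nodes in I_k with Lagrange basis polynomials u_{j,k} (so that u_{j,k}(x_{l,k}) = 1 if j = l and 0 otherwise). Let y : [a, b] → ℝ, let y_h be the piecewise interpolant defined on each I_k by y_h(x) = ∑_{j=1}^{m_k} y(x_{j,k})·u_{j,k}(x), and let y_c be defined on each I_k by y_c(x) = ∑_{j=1}^{m_k} c_{j,k}·u_{j,k}(x) for given real coefficients c_{j,k}. Let m̄ = max_k m_k, and suppose: (i) sup_{x∈[a,b]} |y(x) - y_h(x)| ≤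 K·E for some E ≥ 0; (ii) for every k, sup_{x∈I_k} ∑_{j=1}^{m_k} |u_{j,k}(x)| ≤ (1/π)·ln(m̄) + 1.07618; and (iii) |c_{j,k} - y(x_{j,k})| ≤ δ/K for all j, k, where δ ≥ 0. Then sup_{x∈[a,b]} |y(x) - y_c(x)| ≤ K·E + δ·((1/π)·ln(m̄) + 1.07618). -/
open Finset

theorem abs_sum_mul_sub_sum_mul_le {ι : Type*} (s : Finset ι) (p q w : ι → ℝ) {ε : ℝ}
    (h : ∀ j ∈ s, |p j - q j| ≤ ε) :
    |∑ j ∈ s, p j * w j - ∑ j ∈ s, q j * w j| ≤ ε * ∑ j ∈ s, |w j| := by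
  rw [← sum_sub_distrib, mul_sum]
  refine (abs_sum_le_sum_abs _ _).trans (sum_le_sum fun j hj => ?_)
  rw [← sub_mul, abs_mul]
  exact mul_le_mul_of_nonneg_right (h j hj) (abs_nonneg _)

theorem stmt_17_general (a b : ℝ) (K : ℕ)
    (I : Fin K → Set ℝ)
    (hcover : Set.Icc a b ⊆ ⋃ k, I k)
    (m : Fin K → ℕ)
    (x : (k : Fin K) → Fin (m k) → ℝ)
    (u : (k : Fin K) → Fin (m k) → ℝ → ℝ)
    (y yh yc : ℝ → ℝ) (coef : (k : Fin K) → Fin (m k) → ℝ)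
    (hyh : ∀ k, ∀ t ∈ I k, yh t = ∑ j, y (x k j) * u k j t)
    (hyc : ∀ k, ∀ t ∈ I k, yc t = ∑ j, coef k j * u k j t)
    (mbar : ℕ)
    (E δ : ℝ) (hδ : 0 ≤ δ)
    (hi : ∀ t ∈ Set.Icc a b, |y t - yh t| ≤ K * E)
    (hii : ∀ k, ∀ t ∈ I k,
      (∑ j, |u k j t|) ≤ (1 / Real.pi) * Real.log mbar + 1.07618)
    (hiii : ∀ k j, |coef k j - y (x k j)| ≤ δ / K) :
    ∀ t ∈ Set.Icc a b,
      |y t - yc t| ≤ K * E + δ * ((1 / Real.pi) * Real.log mbar + 1.07618) := by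
  intro t ht
  obtain ⟨k, hk⟩ := Set.mem_iUnion.mp (hcover ht)
  have hcoef : |yh t - yc t| ≤ δ / K * ∑ j, |u k j t| := by
    rw [hyh k t hk, hyc k t hk]
    exact abs_sum_mul_sub_sum_mul_le _ _ _ _ fun j _ => abs_sub_comm (coef k j) _ ▸ hiii k j
  have hδK : δ / K ≤ δ := div_le_self hδ (Nat.one_le_cast.mpr k.pos)
  calc |y t - yc t| ≤ |y t - yh t| + |yh t - yc t| := abs_sub_le _ _ _
    _ ≤ K * E + δ * ((1 / Real.pi) * Real.log mbar + 1.07618) :=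
      add_le_add (hi t ht) <| hcoef.trans <|
        mul_le_mul hδK (hii k t hk) (sum_nonneg fun j _ => abs_nonneg _) hδ

theorem stmt_17 (a b : ℝ) (hab : a < b) (K : ℕ) (hK : 0 < K)
    (I : Fin K → Set ℝ) (c d : Fin K → ℝ)
    (hI : ∀ k, I k = Set.Icc (c k) (d k))
    (hsub : ∀ k, I k ⊆ Set.Icc a b)
    (hcover : Set.Icc a b ⊆ ⋃ k, I k)
    (m : Fin K → ℕ) (hm : ∀ k, 0 < m k)
    (x : (k : Fin K) → Fin (m k) → ℝ)
    (hxmem : ∀ k j, x k j ∈ I k)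
    (hxinj : ∀ k, Function.Injective (x k))
    (u : (k : Fin K) → Fin (m k) → ℝ → ℝ)
    (hlag : ∀ k j l, u k j (x k l) = if j = l then (1 : ℝ) else 0)
    (y yh yc : ℝ → ℝ) (coef : (k : Fin K) → Fin (m k) → ℝ)
    (hyh : ∀ k, ∀ t ∈ I k, yh t = ∑ j, y (x k j) * u k j t)
    (hyc : ∀ k, ∀ t ∈ I k, yc t = ∑ j, coef k j * u k j t)
    (mbar : ℕ) (hmbar : mbar = Finset.univ.sup m)
    (E δ : ℝ) (hE : 0 ≤ E) (hδ : 0 ≤ δ)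
    (hi : ∀ t ∈ Set.Icc a b, |y t - yh t| ≤ K * E)
    (hii : ∀ k, ∀ t ∈ I k,
      (∑ j, |u k j t|) ≤ (1 / Real.pi) * Real.log mbar + 1.07618)
    (hiii : ∀ k j, |coef k j - y (x k j)| ≤ δ / K) :
    ∀ t ∈ Set.Icc a b,
      |y t - yc t| ≤ K * E + δ * ((1 / Real.pi) * Real.log mbar + 1.07618) :=
  stmt_17_general a b K I hcover m x u y yh yc coef hyh hyc mbar E δ hδ hi hii hiii
end
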